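/- The 22×22 Gram matrix (B(w_i, w_j))_{1≤i,j≤22} of the vectors w_1,…,w_22 equals the block-diagonal matrix E8(−1) ⊕ E8(−1) ⊕ H ⊕ H ⊕ H (with the blocks occupying indices 1–8, 9–16, 17–18, 19–20, 21–22 respectively). -/

import Mathlib

open Matrix

/-- `V = ℚ²²`, with basis vectors indexed so that indices `0,…,15` correspond to
`L_1,…,L_16` and indices `16,…,21` to `T_12, T_13, T_14, T_23, T_24, T_34`. -/
abbrev V : Type := Fin 22 → ℚ

/-- The `i`-th standard basis vector of `V`. -/
def e (i : Fin 22) : V := Pi.single i 1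

/-- `L n` is the basis vector `L_{n+1}` (0-indexed: `L 0 = L_1`, …, `L 15 = L_16`). -/
def L (n : Fin 16) : V := e (Fin.castLE (by norm_num) n)

def T12 : V := e 16
def T13 : V := e 17
def T14 : V := e 18
def T23 : V := e 19
def T24 : V := e 20
def T34 : V := e 21

/-- The Gram matrix, in the basis `L_1,…,L_16,T_12,T_13,T_14,T_23,T_24,T_34`, of the
symmetric bilinear form determined by `B(L_i,L_j) = -2δ_ij`, `B(L_i,T_pq) = 0`,
`B(T_12,T_34) = B(T_14,T_23) = 2`, `B(T_13,T_24) = -2`, and all other products of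
distinct `T`-basis vectors equal to `0`. -/
def gram : Matrix (Fin 22) (Fin 22) ℚ :=
  Matrix.of fun i j =>
    if i.1 < 16 ∨ j.1 < 16 then (if i = j then -2 else 0)
    else if i.1 + j.1 = 37 then (if i.1 = 17 ∨ i.1 = 20 then -2 else 2)
    else 0

/-- The symmetric bilinear form `B` on `V` with the Gram matrix `gram`. -/
def B (v w : V) : ℚ := v ⬝ᵥ gram.mulVec w

/- The vectors `w_1,…,w_22` (here named `w1,…,w22`); recall `L 0 = L_1`, etc. -/
def w1 : V := (1 / 2 : ℚ) • (L 0 - L 2 - L 4 - L 6) - (1 / 2 : ℚ) • T12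
def w2 : V := (1 / 2 : ℚ) • (L 0 + L 1 + L 4 + L 5) - (1 / 2 : ℚ) • (T13 + T23)
def w3 : V := (1 / 2 : ℚ) • (-L 0 - L 1 + L 4 + L 5) + (1 / 2 : ℚ) • (T13 + T23)
def w4 : V := -L 5
def w5 : V := (1 / 2 : ℚ) • (L 2 + L 3 - L 4 + L 5) - (1 / 2 : ℚ) • T23
def w6 : V := -L 3
def w7 : V := (1 / 2 : ℚ) • (-L 2 + L 3 + L 6 + L 7) - (1 / 2 : ℚ) • (T13 - T23)
def w8 : V := -L 7
def w9 : V := (1 / 2 : ℚ) • (L 8 - L 10 - L 12 - L 14) - (1 / 2 : ℚ) • T12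
def w10 : V := (1 / 2 : ℚ) • (L 8 + L 9 + L 12 + L 13) - (1 / 2 : ℚ) • (T13 + T23)
def w11 : V := (1 / 2 : ℚ) • (-L 8 - L 9 + L 12 + L 13) + (1 / 2 : ℚ) • (T13 + T23)
def w12 : V := -L 13
def w13 : V := (1 / 2 : ℚ) • (L 10 + L 11 - L 12 + L 13) - (1 / 2 : ℚ) • T23
def w14 : V := -L 11
def w15 : V := (1 / 2 : ℚ) • (-L 10 + L 11 + L 14 + L 15) - (1 / 2 : ℚ) • (T13 - T23)
def w16 : V := -L 15
def w17 : V := T12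
def w19 : V := T13
def w21 : V := T23
def w18' : V := -(1 / 2 : ℚ) • (L 0 - L 1 + L 8 - L 9) + (1 / 2 : ℚ) • T34
def w20' : V := -(1 / 2 : ℚ) • (L 0 + L 6 + L 8 + L 14) - (1 / 2 : ℚ) • T24
def w22' : V := -(1 / 2 : ℚ) • (L 0 + L 2 + L 8 + L 10) + (1 / 2 : ℚ) • T14
def w18 : V := w18' + w17
def w20 : V := w20' + w17 + w19
def w22 : V := w22' + w17 + w19 + w21

/-- The family `w_1,…,w_22` (0-indexed: `w 0 = w_1`, …, `w 21 = w_22`). -/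
def w : Fin 22 → V :=
  ![w1, w2, w3, w4, w5, w6, w7, w8, w9, w10, w11, w12, w13, w14, w15, w16,
    w17, w18, w19, w20, w21, w22]

/-- The matrix `E8(-1)`. -/
def E8neg : Matrix (Fin 8) (Fin 8) ℚ :=
  -(!![2, 0, -1, 0, 0, 0, 0, 0;
       0, 2, 0, -1, 0, 0, 0, 0;
       -1, 0, 2, -1, 0, 0, 0, 0;
       0, -1, -1, 2, -1, 0, 0, 0;
       0, 0, 0, -1, 2, -1, 0, 0;
       0, 0, 0, 0, -1, 2, -1, 0;
       0, 0, 0, 0, 0, -1, 2, -1;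
       0, 0, 0, 0, 0, 0, -1, 2])

/-- The block-diagonal matrix `E8(-1) ⊕ E8(-1) ⊕ H ⊕ H ⊕ H`, the blocks occupying
indices 0–7, 8–15, 16–17, 18–19, 20–21 (0-indexed), where `H = !![0,1;1,0]`. -/
def Qcan : Matrix (Fin 22) (Fin 22) ℚ :=
  Matrix.of fun i j =>
    if h : i.1 < 8 ∧ j.1 < 8 then E8neg ⟨i.1, h.1⟩ ⟨j.1, h.2⟩
    else if h2 : 8 ≤ i.1 ∧ i.1 < 16 ∧ 8 ≤ j.1 ∧ j.1 < 16 then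
      E8neg ⟨i.1 - 8, by omega⟩ ⟨j.1 - 8, by omega⟩
    else if (i.1 = 16 ∧ j.1 = 17) ∨ (i.1 = 17 ∧ j.1 = 16) ∨
            (i.1 = 18 ∧ j.1 = 19) ∨ (i.1 = 19 ∧ j.1 = 18) ∨
            (i.1 = 20 ∧ j.1 = 21) ∨ (i.1 = 21 ∧ j.1 = 20) then 1
    else 0

/-- The 22×22 Gram matrix of `w_1,…,w_22` with respect to `B` equals the
block-diagonal matrix `E8(-1) ⊕ E8(-1) ⊕ H ⊕ H ⊕ H`. -/
theorem gram_matrix_w_eq_canonical :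
    (Matrix.of fun i j : Fin 22 => B (w i) (w j)) = Qcan := by
  decide +kernel
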